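/- arXiv:2301.12095 — 2 statements merged into one kernel-verified Lean document; each statement's English description precedes it below -/
import Mathlib

section
/- Let M ≥ 1 be an integer, let T : ℝ^{2M} → ℝ^M be a continuous function, let K ⊆ ℝ^{2M} be a compact set, and let ε > 0. Then there exist a positive integer d̂, a matrix S ∈ ℝ^{M × d̂M} whose M rows are linearly independent (i.e., S has rank M, so that S admits a right inverse S⁺ with S·S⁺ = I_M), a matrix B ∈ ℝ^{d̂M × 2M}, and a vector A ∈ ℝ^{d̂M} such that for every X ∈ K one has ‖T(X) − S·ReLU(B·X + A)‖ ≤ ε, where ‖·‖ denotes the Euclidean norm on ℝ^M. -/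
/-- The Euclidean norm on `ℝ^M` (vectors indexed by `Fin M`). -/
noncomputable def eNorm {M : ℕ} (v : Fin M → ℝ) : ℝ :=
  ‖(WithLp.equiv 2 (Fin M → ℝ)).symm v‖

/-- The rectified linear unit applied componentwise. -/
def relu {n : Type*} (z : n → ℝ) : n → ℝ := fun i => max (z i) 0

/-!
Exponential ridge functions `x ↦ exp (ℓ x)`, `ℓ` a continuous linear functional, are closed under
products and separate points, so by Stone–Weierstrass their span is dense in `C(K, ℝ)`. Each of them
is a uniform limit of ReLU networks, since on an interval `exp` is uniformly approximated by its
piecewise linear interpolants, and these are combinations of ramps `t ↦ max (t - s) 0`. Hence every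
coordinate of `T` is approximated by a ReLU network. The `M` networks are merged into one hidden
layer, to which `M` units with bias `-1` are added: they never fire, so the output is unchanged, but
with identity outer weights they make `S = [S₀ | 1]` right invertible.
-/

open Set Matrix

def reluSpan₁ : Submodule ℝ (ℝ → ℝ) :=
  Submodule.span ℝ (range fun p : ℝ × ℝ => fun t => max (p.1 * t + p.2) 0)

lemma const_mem_reluSpan₁ (c : ℝ) : (fun _ => c) ∈ reluSpan₁ := by
  convert reluSpan₁.smul_mem c (Submodule.subset_span ⟨(0, 1), rfl⟩) using 1
  ext; simp

noncomputable def ramp (s s' t : ℝ) : ℝ := (max (t - s) 0 - max (t - s') 0) / (s' - s)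

lemma ramp_mem_reluSpan₁ (s s' : ℝ) : ramp s s' ∈ reluSpan₁ := by
  convert reluSpan₁.smul_mem (s' - s)⁻¹ (reluSpan₁.sub_mem
    (Submodule.subset_span ⟨(1, -s), rfl⟩) (Submodule.subset_span ⟨(1, -s'), rfl⟩)) using 1
  ext t; simp [ramp, div_eq_inv_mul, sub_eq_add_neg]

section Ramp

variable {s s' t : ℝ}

lemma ramp_of_le (hss' : s < s') (ht : t ≤ s) : ramp s s' t = 0 := by
  simp [ramp, max_eq_right (sub_nonpos.2 ht), max_eq_right (sub_nonpos.2 (ht.trans hss'.le))]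

lemma ramp_of_ge (hss' : s < s') (ht : s' ≤ t) : ramp s s' t = 1 := by
  rw [ramp, max_eq_left (sub_nonneg.2 (hss'.le.trans ht)), max_eq_left (sub_nonneg.2 ht)]
  field_simp [sub_ne_zero.2 hss'.ne']
  ring

lemma ramp_mem_Icc (hss' : s < s') (t : ℝ) : ramp s s' t ∈ Icc (0 : ℝ) 1 := by
  rcases le_total t s with hts | hst
  · simp [ramp_of_le hss' hts]
  rcases le_total s' t with hst' | hts'
  · simp [ramp_of_ge hss' hst']
  rw [ramp, max_eq_left (sub_nonneg.2 hst), max_eq_right (sub_nonpos.2 hts'), sub_zero]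
  exact ⟨div_nonneg (by linarith) (by linarith),
    (div_le_one (by linarith)).2 (by linarith)⟩

end Ramp

/-- The piecewise linear interpolant of `g` at the knots `s 0, …, s N`. -/
noncomputable def linearInterp (g : ℝ → ℝ) (s : ℕ → ℝ) : ℕ → ℝ → ℝ
  | 0 => fun _ => g (s 0)
  | N + 1 => linearInterp g s N + (g (s (N + 1)) - g (s N)) • ramp (s N) (s (N + 1))

lemma linearInterp_mem_reluSpan₁ (g : ℝ → ℝ) (s : ℕ → ℝ) : ∀ N, linearInterp g s N ∈ reluSpan₁
  | 0 => const_mem_reluSpan₁ _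
  | N + 1 => reluSpan₁.add_mem (linearInterp_mem_reluSpan₁ g s N)
      (reluSpan₁.smul_mem _ (ramp_mem_reluSpan₁ _ _))

section Interp

variable {g : ℝ → ℝ} {s : ℕ → ℝ}

lemma linearInterp_of_ge (hs : StrictMono s) :
    ∀ {N : ℕ} {t : ℝ}, s N ≤ t → linearInterp g s N t = g (s N)
  | 0, _, _ => rfl
  | N + 1, t, ht => by
    have hN : s N < s (N + 1) := hs N.lt_succ_self
    simp only [linearInterp, Pi.add_apply, Pi.smul_apply, smul_eq_mul]
    rw [linearInterp_of_ge hs (hN.le.trans ht), ramp_of_ge hN ht]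
    ring

lemma abs_sub_linearInterp_le (hs : StrictMono s) {ε : ℝ} (hε : 0 ≤ ε) :
    ∀ {N : ℕ}, (∀ k < N, ∀ t ∈ Icc (s k) (s (k + 1)), ∀ t' ∈ Icc (s k) (s (k + 1)),
      |g t - g t'| ≤ ε) → ∀ t ∈ Icc (s 0) (s N), |g t - linearInterp g s N t| ≤ ε
  | 0, _, t, ht => by
    simp [linearInterp, le_antisymm ht.2 ht.1, hε]
  | N + 1, hg, t, ht => by
    have hN : s N < s (N + 1) := hs N.lt_succ_self
    simp only [linearInterp, Pi.add_apply, Pi.smul_apply, smul_eq_mul]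
    rcases le_total t (s N) with htN | hNt
    · rw [ramp_of_le hN htN, mul_zero, add_zero]
      exact abs_sub_linearInterp_le hs hε (fun k hk => hg k (by omega)) t ⟨ht.1, htN⟩
    -- on the last cell the interpolant is a convex combination of `g (s N)` and `g (s (N + 1))`
    have hcell : t ∈ Icc (s N) (s (N + 1)) := ⟨hNt, ht.2⟩
    have hend : ∀ t' ∈ Icc (s N) (s (N + 1)), g t' ∈ Metric.closedBall (g t) ε := fun t' ht' =>
      Metric.mem_closedBall.2 ((abs_sub_comm _ _).trans_le (hg N N.lt_succ_self t hcell t' ht'))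
    have hmem := (convex_closedBall (g t) ε).add_smul_sub_mem (hend _ ⟨le_rfl, hN.le⟩)
      (hend _ ⟨hN.le, le_rfl⟩) (ramp_mem_Icc hN t)
    rw [Metric.mem_closedBall, Real.dist_eq, abs_sub_comm, smul_eq_mul] at hmem
    rwa [linearInterp_of_ge hs hNt, mul_comm]

end Interp

theorem exists_mem_reluSpan₁_abs_sub_le {g : ℝ → ℝ} {a b : ℝ} (hg : ContinuousOn g (Icc a b))
    {ε : ℝ} (hε : 0 < ε) : ∃ φ ∈ reluSpan₁, ∀ t ∈ Icc a b, |g t - φ t| ≤ ε := by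
  rcases le_or_gt b a with hba | hab
  · refine ⟨fun _ => g a, const_mem_reluSpan₁ _, fun t ht => ?_⟩
    simp [le_antisymm (ht.2.trans hba) ht.1, hε.le]
  obtain ⟨δ, hδ, hgδ⟩ := Metric.uniformContinuousOn_iff_le.1
    (isCompact_Icc.uniformContinuousOn_of_continuous hg) ε hε
  obtain ⟨N, hN⟩ := exists_nat_gt ((b - a) / δ)
  have hNpos : (0 : ℝ) < N := (div_pos (by linarith) hδ).trans hN
  set step := (b - a) / N
  have hstep : 0 < step := div_pos (by linarith) hNpos
  have hstepδ : step ≤ δ := by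
    rw [div_lt_iff₀ hδ] at hN
    exact (div_le_iff₀ hNpos).2 (by linarith)
  set s : ℕ → ℝ := fun k => a + k * step
  have hs : StrictMono s := fun i j hij => by simp only [s]; gcongr
  have hsN : s N = b := by simp only [s, step]; field_simp; ring
  refine ⟨linearInterp g s N, linearInterp_mem_reluSpan₁ g s N, ?_⟩
  refine fun t ht => abs_sub_linearInterp_le hs hε.le (fun k hk t ht t' ht' => ?_) t
    (by simpa [s, hsN] using ht)
  have hsub : Icc (s k) (s (k + 1)) ⊆ Icc a b := Icc_subset_Icc
    (by simpa [s] using hs.monotone k.zero_le) (hsN ▸ hs.monotone hk)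
  refine hgδ t (hsub ht) t' (hsub ht') ?_
  rw [Real.dist_eq, abs_le]
  simp only [s, Nat.cast_succ] at ht ht'
  constructor <;> linarith [ht.1, ht.2, ht'.1, ht'.2]

section ReluSpan

variable {E : Type*} [AddCommGroup E] [Module ℝ E] [TopologicalSpace E]

def reluUnit (p : StrongDual ℝ E × ℝ) : C(E, ℝ) := ⟨fun x => max (p.1 x + p.2) 0, by fun_prop⟩

def reluSpan (K : Set E) : Submodule ℝ C(K, ℝ) :=
  Submodule.span ℝ (range fun p => (reluUnit p).restrict K)

lemma exists_mem_reluSpan_comp {φ : ℝ → ℝ} (hφ : φ ∈ reluSpan₁) (K : Set E)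
    (ℓ : StrongDual ℝ E) : ∃ q ∈ reluSpan K, ∀ x : K, q x = φ (ℓ x) := by
  induction hφ using Submodule.span_induction with
  | mem φ hφ =>
    obtain ⟨p, rfl⟩ := hφ
    exact ⟨_, Submodule.subset_span ⟨(p.1 • ℓ, p.2), rfl⟩, fun x => by simp [reluUnit]⟩
  | zero => exact ⟨0, zero_mem _, fun x => rfl⟩
  | add φ ψ _ _ hφ hψ =>
    obtain ⟨q, hq, hqφ⟩ := hφ
    obtain ⟨r, hr, hrψ⟩ := hψ
    exact ⟨q + r, add_mem hq hr, fun x => by simp [hqφ, hrψ]⟩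
  | smul c φ _ hφ =>
    obtain ⟨q, hq, hqφ⟩ := hφ
    exact ⟨c • q, Submodule.smul_mem _ c hq, fun x => by simp [hqφ]⟩

noncomputable def expRidge (K : Set E) (ℓ : StrongDual ℝ E) : C(K, ℝ) :=
  ⟨fun x => Real.exp (ℓ x), by fun_prop⟩

lemma expRidge_mem_closure_reluSpan {K : Set E} (hK : IsCompact K) (ℓ : StrongDual ℝ E) :
    expRidge K ℓ ∈ closure (reluSpan K : Set C(K, ℝ)) := by
  have := isCompact_iff_compactSpace.mp hK
  obtain ⟨C, hC⟩ := hK.exists_bound_of_continuousOn ℓ.continuous.continuousOn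
  refine Metric.mem_closure_iff.2 fun ε hε => ?_
  obtain ⟨φ, hφ, hφexp⟩ := exists_mem_reluSpan₁_abs_sub_le
    Real.continuous_exp.continuousOn (half_pos hε) (a := -C) (b := C)
  obtain ⟨q, hq, hqφ⟩ := exists_mem_reluSpan_comp hφ K ℓ
  refine ⟨q, hq, ((ContinuousMap.dist_le (half_pos hε).le).2 fun x => ?_).trans_lt
    (half_lt_self hε)⟩
  rw [Real.dist_eq, hqφ]
  exact hφexp _ (abs_le.1 (hC x x.2))

theorem dense_reluSpan [SeparatingDual ℝ E] {K : Set E} (hK : IsCompact K) :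
    Dense (reluSpan K : Set C(K, ℝ)) := by
  have := isCompact_iff_compactSpace.mp hK
  let A := Algebra.adjoin ℝ (range (expRidge K))
  have hsep : A.SeparatesPoints := fun x y hxy => by
    obtain ⟨ℓ, hℓ⟩ :=
      SeparatingDual.exists_separating_of_ne (R := ℝ) (Subtype.coe_injective.ne hxy)
    exact ⟨_, ⟨expRidge K ℓ, Algebra.subset_adjoin ⟨ℓ, rfl⟩, rfl⟩,
      fun h => hℓ (Real.exp_injective h)⟩
  -- the exponentials `exp ∘ ℓ` are closed under products, so they span the algebra they generate
  have hmul : (Submonoid.closure (range (expRidge K)) : Set C(K, ℝ)) ⊆ range (expRidge K) := by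
    intro f hf
    induction hf using Submonoid.closure_induction with
    | mem f hf => exact hf
    | one => exact ⟨0, by ext; simp [expRidge]⟩
    | mul f g _ _ hf hg =>
      obtain ⟨ℓ, rfl⟩ := hf
      obtain ⟨ℓ', rfl⟩ := hg
      exact ⟨ℓ + ℓ', by ext; simp [expRidge, Real.exp_add]⟩
  have hA : (A : Set C(K, ℝ)) ⊆ (reluSpan K).topologicalClosure := by
    intro f hf
    change f ∈ Subalgebra.toSubmodule A at hf
    rw [Algebra.adjoin_eq_span] at hf
    refine Submodule.span_le.2 (hmul.trans ?_) hf
    rintro _ ⟨ℓ, rfl⟩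
    exact expRidge_mem_closure_reluSpan hK ℓ
  rw [Submodule.dense_iff_topologicalClosure_eq_top, eq_top_iff]
  intro f _
  have hfA : f ∈ A.topologicalClosure := by
    rw [ContinuousMap.subalgebra_topologicalClosure_eq_top_of_separatesPoints A hsep]; trivial
  exact closure_minimal hA (reluSpan K).isClosed_topologicalClosure hfA

theorem exists_finsupp_abs_sub_sum_relu_lt [SeparatingDual ℝ E] {K : Set E} (hK : IsCompact K)
    {f : E → ℝ} (hf : ContinuousOn f K) {ε : ℝ} (hε : 0 < ε) :
    ∃ c : StrongDual ℝ E × ℝ →₀ ℝ,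
      ∀ x ∈ K, |f x - c.sum fun p a => a * max (p.1 x + p.2) 0| < ε := by
  have := isCompact_iff_compactSpace.mp hK
  obtain ⟨g, hg, hfg⟩ := (dense_reluSpan hK).exists_dist_lt ⟨K.domRestrict f, hf.domRestrict⟩ hε
  obtain ⟨c, rfl⟩ := Finsupp.mem_span_range_iff_exists_finsupp.1 hg
  refine ⟨c, fun x hx => ?_⟩
  have := (ContinuousMap.dist_apply_le_dist ⟨x, hx⟩).trans_lt hfg
  simpa [Real.dist_eq, Finsupp.sum, reluUnit] using this

end ReluSpan

lemma eNorm_le_sum_abs {M : ℕ} (v : Fin M → ℝ) : eNorm v ≤ ∑ i, |v i| := by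
  rw [eNorm, EuclideanSpace.norm_eq, Real.sqrt_le_left (by positivity)]
  exact Finset.sum_sq_le_sq_sum_of_nonneg fun i _ => norm_nonneg (v i)

lemma Matrix.linearIndependent_row_of_mul_eq_one {m k R : Type*} [Fintype m] [Fintype k]
    [DecidableEq m] [CommRing R] {S : Matrix m k R} {S' : Matrix k m R} (h : S * S' = 1) :
    LinearIndependent R S.row := by
  rw [← vecMul_injective_iff]
  exact Function.LeftInverse.injective (g := (· ᵥ* S')) fun v => by simp [vecMul_vecMul, h]

lemma StrongDual.apply_eq_dotProduct {n : Type*} [Fintype n] [DecidableEq n]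
    (ℓ : StrongDual ℝ (n → ℝ)) (x : n → ℝ) : ℓ x = (fun j => ℓ (Pi.single j 1)) ⬝ᵥ x := by
  conv_lhs => rw [pi_eq_sum_univ' x]
  simp [dotProduct, mul_comm]

variable {m n ι κ : Type*}

lemma relu_sumElim (u : ι → ℝ) (v : κ → ℝ) :
    relu (Sum.elim u v) = Sum.elim (relu u) (relu v) := by
  ext (i | i) <;> rfl

lemma fromCols_one_mulVec_relu [Fintype m] [DecidableEq m] [Fintype ι] [Fintype n]
    (S : Matrix m ι ℝ) (B : Matrix ι n ℝ) (A : ι → ℝ) (X : n → ℝ) :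
    fromCols S (1 : Matrix m m ℝ) *ᵥ relu (fromRows B 0 *ᵥ X + Sum.elim A (-1)) =
      S *ᵥ relu (B *ᵥ X + A) := by
  have hdead : relu (0 *ᵥ X + -1 : m → ℝ) = 0 := by ext; simp [relu]
  rw [fromRows_mulVec, ← Sum.elim_add_add, relu_sumElim, hdead, fromCols_mulVec_sumElim,
    mulVec_zero, add_zero]

lemma submatrix_mulVec_relu [Fintype ι] [Fintype κ] [Fintype n]
    (S : Matrix m ι ℝ) (B : Matrix ι n ℝ) (A : ι → ℝ) (e : κ ≃ ι) (X : n → ℝ) :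
    S.submatrix id e *ᵥ relu (B.submatrix e id *ᵥ X + A ∘ e) = S *ᵥ relu (B *ᵥ X + A) := by
  change S.submatrix id e *ᵥ (relu (B *ᵥ X + A) ∘ e) = _
  simp [submatrix_mulVec_equiv, Function.comp_assoc]

theorem exists_mul_eq_one_mulVec_relu_eq [Fintype m] [DecidableEq m] [Fintype ι] [Fintype κ]
    [Fintype n] (S₀ : Matrix m ι ℝ) (B₀ : Matrix ι n ℝ) (A₀ : ι → ℝ) (e : κ ≃ ι ⊕ m) :
    ∃ (S : Matrix m κ ℝ) (B : Matrix κ n ℝ) (A : κ → ℝ), (∃ S' : Matrix κ m ℝ, S * S' = 1) ∧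
      ∀ X, S *ᵥ relu (B *ᵥ X + A) = S₀ *ᵥ relu (B₀ *ᵥ X + A₀) := by
  refine ⟨(fromCols S₀ 1).submatrix id e, (fromRows B₀ 0).submatrix e id, Sum.elim A₀ (-1) ∘ e,
    ⟨(fromRows 0 1).submatrix e id, ?_⟩, fun X => ?_⟩
  · rw [submatrix_mul_equiv, fromCols_mul_fromRows]; simp
  · rw [submatrix_mulVec_relu, fromCols_one_mulVec_relu]

lemma mulVec_relu_eq_finsupp_sum [Fintype n] [DecidableEq n]
    (c : m → StrongDual ℝ (n → ℝ) × ℝ →₀ ℝ) {U : Finset (StrongDual ℝ (n → ℝ) × ℝ)}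
    (hU : ∀ r, (c r).support ⊆ U) (X : n → ℝ) (r : m) :
    (of (fun r (p : U) => c r p) *ᵥ
        relu (of (fun (p : U) j => p.1.1 (Pi.single j 1)) *ᵥ X + fun p => p.1.2)) r =
      (c r).sum fun p a => a * max (p.1 X + p.2) 0 := by
  rw [Finsupp.sum_of_support_subset _ (hU r) _ (fun _ _ => zero_mul (max _ 0)),
    ← Finset.sum_coe_sort U]
  refine Finset.sum_congr rfl fun p _ => ?_
  rw [StrongDual.apply_eq_dotProduct]
  rfl

/-- Strengthened form of the paper's Lemma 1: universal approximation of a continuous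
vector-valued function on a compact set by a one-hidden-layer ReLU network whose outer
weight matrix `S` has linearly independent rows (full row rank), hence admits a right
inverse `S⁺` with `S * S⁺ = 1`. -/
theorem shallow_relu_universal_approximation_full_rank
    (M : ℕ) (hM : 1 ≤ M)
    (T : (Fin (2 * M) → ℝ) → (Fin M → ℝ)) (hT : Continuous T)
    (K : Set (Fin (2 * M) → ℝ)) (hK : IsCompact K)
    (ε : ℝ) (hε : 0 < ε) :
    ∃ (d : ℕ), 0 < d ∧
      ∃ (S : Matrix (Fin M) (Fin (d * M)) ℝ)
        (B : Matrix (Fin (d * M)) (Fin (2 * M)) ℝ)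
        (A : Fin (d * M) → ℝ),
        LinearIndependent ℝ (fun i => S i) ∧
        (∃ Sp : Matrix (Fin (d * M)) (Fin M) ℝ, S * Sp = 1) ∧
        ∀ X ∈ K, eNorm (T X - S.mulVec (relu (B.mulVec X + A))) ≤ ε := by
  classical
  have hMpos : (0 : ℝ) < M := by exact_mod_cast hM
  choose c hc using fun r : Fin M => exists_finsupp_abs_sub_sum_relu_lt hK
    ((continuous_apply r).comp hT).continuousOn (div_pos hε hMpos)
  set U := Finset.univ.biUnion fun r => (c r).support
  -- padding the common hidden layer makes its size, with the `M` dead units, a multiple of `M`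
  obtain ⟨U', hUU', hU'⟩ :=
    Infinite.exists_superset_card_eq U (U.card * M) (Nat.le_mul_of_pos_right _ hM)
  have hsupp : ∀ r, (c r).support ⊆ U' := fun r =>
    (Finset.subset_biUnion_of_mem _ (Finset.mem_univ r)).trans hUU'
  have e : Fin ((U.card + 1) * M) ≃ U' ⊕ Fin M := Fintype.equivOfCardEq (by simp [hU', add_mul])
  obtain ⟨S, B, A, ⟨S', hS'⟩, hnet⟩ := exists_mul_eq_one_mulVec_relu_eq
    (of fun r (p : U') => c r p) (of fun (p : U') j => p.1.1 (Pi.single j 1)) (fun p => p.1.2) e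
  refine ⟨U.card + 1, U.card.succ_pos, S, B, A, linearIndependent_row_of_mul_eq_one hS',
    ⟨S', hS'⟩, fun X hX => ?_⟩
  calc eNorm (T X - S *ᵥ relu (B *ᵥ X + A))
      ≤ ∑ r, |T X r - (S *ᵥ relu (B *ᵥ X + A)) r| := eNorm_le_sum_abs _
    _ ≤ ∑ _r : Fin M, ε / M := Finset.sum_le_sum fun r _ => by
        rw [hnet, mulVec_relu_eq_finsupp_sum c hsupp]
        exact (hc r X hX).le
    _ = ε := by simp [mul_div_cancel₀ _ hMpos.ne']
end

section
/- Let M ≥ 1 and L ≥ 0 be integers, let m > 0 and ε > 0 be reals, and set ε̂ := m·ε / (2·(1 + m)^L). Let g ∈ ℝ^M and let R, R̂ : ℝ^M × ℝ^M → ℝ^M be maps such that for all x, y ∈ ℝ^M one has ‖R(x, g) − R(y, g)‖ ≤ m·‖x − y‖ and ‖R̂(x, g) − R(x, g)‖ ≤ ε̂, where ‖·‖ denotes the Euclidean norm on ℝ^M. Define sequences (U^l) and (V^l) in ℝ^M by U^0 = V^0, U^{l+1} = U^l + R(U^l, g), and V^{l+1} = V^l + R̂(V^l, g). Suppose moreover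 that U^* ∈ ℝ^M satisfies ‖U^L − U^*‖ ≤ ε/2. Then ‖V^L − U^*‖ ≤ ε. -/
lemma eNorm_add_le {M : ℕ} (a b : Fin M → ℝ) : eNorm (a + b) ≤ eNorm a + eNorm b := by
  unfold eNorm
  have h : (WithLp.equiv 2 (Fin M → ℝ)).symm (a + b)
      = (WithLp.equiv 2 (Fin M → ℝ)).symm a + (WithLp.equiv 2 (Fin M → ℝ)).symm b := rfl
  rw [h]; exact norm_add_le _ _

lemma eNorm_nonneg {M : ℕ} (a : Fin M → ℝ) : 0 ≤ eNorm a := norm_nonneg _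

lemma eNorm_zero {M : ℕ} : eNorm (0 : Fin M → ℝ) = 0 := by
  unfold eNorm
  have h : (WithLp.equiv 2 (Fin M → ℝ)).symm 0 = 0 := rfl
  rw [h, norm_zero]

/-- Concluding error estimate in the proof of the paper's Theorem 1: with the specific
choice `ε̂ = m·ε / (2·(1+m)^L)` for the uniform approximation error of the perturbed
update, and assuming the exact iteration is within `ε/2` of the true solution `U^*` after
`L` steps, the perturbed iterate `V^L` is within `ε` of `U^*`. -/
theorem perturbed_iteration_final_error
    (M : ℕ) (hM : 1 ≤ M) (L : ℕ) (m ε : ℝ) (hm : 0 < m) (hε : 0 < ε)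
    (g : Fin M → ℝ)
    (R Rh : (Fin M → ℝ) → (Fin M → ℝ) → (Fin M → ℝ))
    (hLip : ∀ x y : Fin M → ℝ, eNorm (R x g - R y g) ≤ m * eNorm (x - y))
    (hApprox : ∀ x : Fin M → ℝ,
      eNorm (Rh x g - R x g) ≤ m * ε / (2 * (1 + m) ^ L))
    (U V : ℕ → (Fin M → ℝ))
    (hUV0 : U 0 = V 0)
    (hU : ∀ l : ℕ, U (l + 1) = U l + R (U l) g)
    (hV : ∀ l : ℕ, V (l + 1) = V l + Rh (V l) g)
    (Ustar : Fin M → ℝ)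
    (hConv : eNorm (U L - Ustar) ≤ ε / 2) :
    eNorm (V L - Ustar) ≤ ε := by
  set εh : ℝ := m * ε / (2 * (1 + m) ^ L) with hεh
  have hmpos : (0:ℝ) < 1 + m := by linarith
  have hεhpos : 0 < εh := by
    apply div_pos (by positivity)
    positivity
  -- main induction: bound on eNorm (V l - U l)
  have key : ∀ l : ℕ, eNorm (V l - U l) ≤ εh * ((1 + m) ^ l - 1) / m := by
    intro l
    induction l with
    | zero =>
        simp only [pow_zero, sub_self, zero_div, mul_zero]
        rw [hUV0, sub_self, eNorm_zero]
    | succ l ih =>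
        have hstep : eNorm (V (l+1) - U (l+1)) ≤ (1 + m) * eNorm (V l - U l) + εh := by
          have hdecomp : V (l+1) - U (l+1)
              = (V l - U l) + (R (V l) g - R (U l) g) + (Rh (V l) g - R (V l) g) := by
            rw [hU l, hV l]; abel
          calc eNorm (V (l+1) - U (l+1))
              ≤ eNorm ((V l - U l) + (R (V l) g - R (U l) g)) + eNorm (Rh (V l) g - R (V l) g) := by
                rw [hdecomp]; exact eNorm_add_le _ _
            _ ≤ (eNorm (V l - U l) + eNorm (R (V l) g - R (U l) g)) + εh := by
                gcongr
                · exact eNorm_add_le _ _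
                · exact hApprox _
            _ ≤ (eNorm (V l - U l) + m * eNorm (V l - U l)) + εh := by
                gcongr; exact hLip _ _
            _ = (1 + m) * eNorm (V l - U l) + εh := by ring
        calc eNorm (V (l+1) - U (l+1))
            ≤ (1 + m) * eNorm (V l - U l) + εh := hstep
          _ ≤ (1 + m) * (εh * ((1 + m) ^ l - 1) / m) + εh := by gcongr
          _ = εh * ((1 + m) ^ (l+1) - 1) / m := by
              field_simp
              ring
  have hVL : eNorm (V L - U L) ≤ ε / 2 := by
    have h1 := key L
    have h2 : εh * ((1 + m) ^ L - 1) / m ≤ εh * (1 + m) ^ L / m := by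
      gcongr
      linarith
    have h3 : εh * (1 + m) ^ L / m = ε / 2 := by
      rw [hεh]
      field_simp
    linarith
  have := eNorm_add_le (V L - U L) (U L - Ustar)
  have hsum : (V L - U L) + (U L - Ustar) = V L - Ustar := by abel
  rw [hsum] at this
  linarith
end
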